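/- arXiv:1809.11012 — 3 statements merged into one kernel-verified Lean document; each statement's English description precedes it below -/
import Mathlib

section
/- For every κ > 0 and every n ∈ ℕ, ∫_0^∞ t² e^{−(κ+1)t} L_n(κt) dt = (2 + κn(κ(n−1) − 4))/(κ+1)^{n+3}. Consequently, the Fourier–Laguerre coefficients of f(t) = (t²/4) e^{2−t} satisfy f_n := ∫_0^∞ e^{−κt} L_n(κt) f(t) dt = (e²/4)(2 + κn(κ(n−1) − 4))/(κ+1)^{n+3}. -/
/-
Expanding `L_n` termwise and integrating `∫₀^∞ t^m e^{-rt} dt = m!/r^{m+1}` turns the first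
integral into `(κ+1)^{-(n+3)} ∑ₖ C(n,k)(k+1)(k+2)(-κ)^k(κ+1)^{n-k}`. Since
`(k+1)(k+2) = 2(C(k,0) + 2C(k,1) + C(k,2))` and
`∑ₖ C(n,k)C(k,s) x^k y^{n-k} = C(n,s) x^s (x+y)^{n-s}`, the choice `x = -κ`, `y = κ+1`
(so that `x + y = 1`) makes the sum `2 - 4nκ + n(n-1)κ²`. The second integral is `e²/4` times the first,
because `e^{-κt} e^{2-t} = e² e^{-(κ+1)t}`.
-/

open Real Filter MeasureTheory

/-- Laguerre polynomial L_n(x) = ∑_{k=0}^n (−1)^k (n choose k) x^k / k! -/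
noncomputable def lagPoly (n : ℕ) (x : ℝ) : ℝ :=
  ∑ k ∈ Finset.range (n + 1), (-1 : ℝ) ^ k * (n.choose k : ℝ) * x ^ k / (k.factorial : ℝ)

open Finset

theorem sum_choose_mul_choose_mul_pow_mul_pow {R : Type*} [CommSemiring R] (x y : R) (n s : ℕ) :
    ∑ k ∈ range (n + 1), (n.choose k * k.choose s : R) * x ^ k * y ^ (n - k) =
      n.choose s * x ^ s * (x + y) ^ (n - s) := by
  by_cases! hsn : n < s
  · rw [Nat.choose_eq_zero_of_lt hsn]
    refine (sum_eq_zero fun k hk => ?_).trans (by simp)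
    rw [Nat.choose_eq_zero_of_lt (by grind : k < s)]
    simp
  rw [← sum_range_add_sum_Ico _ (by omega : s ≤ n + 1), sum_Ico_eq_sum_range,
    show n + 1 - s = n - s + 1 by omega, add_pow, mul_sum]
  have hlow : ∑ k ∈ range s, (n.choose k * k.choose s : R) * x ^ k * y ^ (n - k) = 0 :=
    sum_eq_zero fun k hk => by simp [Nat.choose_eq_zero_of_lt (mem_range.mp hk)]
  rw [hlow, zero_add]
  refine sum_congr rfl fun j _ => ?_
  have hchoose := congrArg (Nat.cast : ℕ → R) (Nat.choose_mul (n := n) (Nat.le_add_right s j))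
  push_cast at hchoose
  rw [hchoose, Nat.add_sub_cancel_left, Nat.sub_sub, pow_add]
  ring

theorem add_one_mul_add_two_eq (k : ℕ) : (k + 1) * (k + 2) = 2 * (1 + 2 * k + k.choose 2) := by
  induction k with
  | zero => rfl
  | succ k ih => rw [Nat.choose_succ_succ', Nat.choose_one_right]; linarith

theorem sum_choose_mul_add_one_mul_add_two_mul_pow_mul_pow {R : Type*} [CommSemiring R]
    {x y : R} (hxy : x + y = 1) (n : ℕ) :
    ∑ k ∈ range (n + 1), (n.choose k * ((k + 1) * (k + 2)) : R) * x ^ k * y ^ (n - k) =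
      2 + 4 * n * x + 2 * n.choose 2 * x ^ 2 := by
  have hsplit : ∀ k : ℕ, (n.choose k * ((k + 1) * (k + 2)) : R) * x ^ k * y ^ (n - k) =
      2 * ((n.choose k * k.choose 0 : R) * x ^ k * y ^ (n - k)) +
      4 * ((n.choose k * k.choose 1 : R) * x ^ k * y ^ (n - k)) +
      2 * ((n.choose k * k.choose 2 : R) * x ^ k * y ^ (n - k)) := by
    intro k
    have hk := congrArg (Nat.cast : ℕ → R) (add_one_mul_add_two_eq k)
    push_cast at hk
    rw [hk, Nat.choose_zero_right, Nat.choose_one_right]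
    push_cast
    ring
  simp only [hsplit, sum_add_distrib, ← mul_sum]
  rw [sum_choose_mul_choose_mul_pow_mul_pow, sum_choose_mul_choose_mul_pow_mul_pow,
    sum_choose_mul_choose_mul_pow_mul_pow]
  simp only [hxy, one_pow, Nat.choose_zero_right, Nat.choose_one_right]
  push_cast
  ring

theorem integrableOn_pow_mul_exp_neg_mul_Ioi (m : ℕ) {r : ℝ} (hr : 0 < r) :
    IntegrableOn (fun t : ℝ => t ^ m * exp (-(r * t))) (Set.Ioi 0) := by
  refine (integrableOn_rpow_mul_exp_neg_mul_rpow (s := m) (neg_one_lt_zero.trans_le m.cast_nonneg)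
    zero_lt_one hr).congr_fun (fun t _ => ?_) measurableSet_Ioi
  simp [Real.rpow_natCast]

theorem integral_pow_mul_exp_neg_mul_Ioi (m : ℕ) {r : ℝ} (hr : 0 < r) :
    ∫ t in Set.Ioi (0 : ℝ), t ^ m * exp (-(r * t)) = m.factorial / r ^ (m + 1) := by
  have h := integral_rpow_mul_exp_neg_mul_Ioi (a := m + 1) (by positivity) hr
  rw [add_sub_cancel_right, Real.Gamma_nat_eq_factorial, ← Nat.cast_add_one] at h
  simp_rw [Real.rpow_natCast] at h
  rw [h, one_div_pow, one_div_mul_eq_div]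

theorem integral_pow_mul_exp_neg_mul_mul_lagPoly_Ioi (j n : ℕ) (κ : ℝ) {r : ℝ} (hr : 0 < r) :
    ∫ t in Set.Ioi (0 : ℝ), t ^ j * exp (-(r * t)) * lagPoly n (κ * t) =
      ∑ k ∈ range (n + 1),
        (-1) ^ k * n.choose k * κ ^ k / k.factorial * ((k + j).factorial / r ^ (k + j + 1)) := by
  have hexpand : ∀ t : ℝ, t ^ j * exp (-(r * t)) * lagPoly n (κ * t) = ∑ k ∈ range (n + 1),
      (-1) ^ k * n.choose k * κ ^ k / k.factorial * (t ^ (k + j) * exp (-(r * t))) := by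
    intro t
    simp only [lagPoly, mul_sum, mul_pow, pow_add]
    exact sum_congr rfl fun k _ => by ring
  simp_rw [hexpand]
  rw [integral_finsetSum _ fun k _ => (integrableOn_pow_mul_exp_neg_mul_Ioi _ hr).const_mul _]
  simp_rw [integral_const_mul, integral_pow_mul_exp_neg_mul_Ioi _ hr]

/-- ∫₀^∞ t² e^{−(κ+1)t} L_n(κt) dt = (2 + κn(κ(n−1) − 4))/(κ+1)^{n+3}, and the
Fourier–Laguerre coefficients of f(t) = (t²/4)e^{2−t} are
f_n = (e²/4)(2 + κn(κ(n−1) − 4))/(κ+1)^{n+3}. -/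
theorem laguerre_coefficients_of_t_sq_exp (κ : ℝ) (hκ : 0 < κ) (n : ℕ) :
    (∫ t in Set.Ioi (0 : ℝ), t ^ 2 * Real.exp (-(κ + 1) * t) * lagPoly n (κ * t))
      = (2 + κ * (n : ℝ) * (κ * ((n : ℝ) - 1) - 4)) / (κ + 1) ^ (n + 3) ∧
    (∫ t in Set.Ioi (0 : ℝ),
        Real.exp (-κ * t) * lagPoly n (κ * t) * (t ^ 2 / 4 * Real.exp (2 - t)))
      = Real.exp 2 / 4 * (2 + κ * (n : ℝ) * (κ * ((n : ℝ) - 1) - 4)) / (κ + 1) ^ (n + 3) := by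
  have hκ1 : 0 < κ + 1 := by linarith
  have hterm : ∀ k ∈ range (n + 1),
      (-1) ^ k * n.choose k * κ ^ k / k.factorial * ((k + 2).factorial / (κ + 1) ^ (k + 2 + 1)) =
        (n.choose k * ((k + 1) * (k + 2)) : ℝ) * (-κ) ^ k * (κ + 1) ^ (n - k) /
          (κ + 1) ^ (n + 3) := by
    intro k hk
    rw [show n + 3 = n - k + (k + 2 + 1) by grind, pow_add, Nat.factorial_succ, Nat.factorial_succ,
      neg_pow]
    push_cast
    field_simp
    ring
  have hfirst : ∫ t in Set.Ioi (0 : ℝ), t ^ 2 * exp (-(κ + 1) * t) * lagPoly n (κ * t) =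
      (2 + κ * n * (κ * (n - 1) - 4)) / (κ + 1) ^ (n + 3) := by
    simp_rw [neg_mul (κ + 1)]
    rw [integral_pow_mul_exp_neg_mul_mul_lagPoly_Ioi 2 n κ hκ1, sum_congr rfl hterm, ← sum_div,
      sum_choose_mul_add_one_mul_add_two_mul_pow_mul_pow (by ring : -κ + (κ + 1) = 1),
      Nat.cast_choose_two]
    ring
  refine ⟨hfirst, ?_⟩
  have hfactor : ∀ t : ℝ, exp (-κ * t) * lagPoly n (κ * t) * (t ^ 2 / 4 * exp (2 - t)) =
      exp 2 / 4 * (t ^ 2 * exp (-(κ + 1) * t) * lagPoly n (κ * t)) := by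
    intro t
    rw [show 2 - t = 2 + -t by ring, exp_add, show -(κ + 1) * t = -κ * t + -t by ring, exp_add]
    ring
  simp_rw [hfactor]
  rw [integral_const_mul, hfirst, mul_div_assoc]
end

section
/- Let λ, μ ∈ ℝ, let x : ℝ → ℝ² be three times continuously differentiable, let s ∈ ℝ with x'(s) ≠ 0, and let ν ∈ ℝ² satisfy ν · x'(s) = 0. Set Ũ_1 = λ ν x'(s)^⊤ + μ x'(s) ν^⊤, Ũ_2 = (λ+2μ) ν x'(s)^⊤ + μ x'(s) ν^⊤, Û_1 = λ ν x''(s)^⊤ + μ x''(s) ν^⊤ + μ (ν · x''(s)) I, and Û_2 = (λ+2μ) ν x''(s)^⊤ + μ x''(s) ν^⊤ + μ (ν · x''(s)) (I − 4 x'(s) x'(s)^⊤/|x'(s)|²). Then x(σ) ≠ x(s) for all σ ≠ s sufficiently close to s, and for k = 1, 2, as σ → s, U_k(x(s), x(σ))/|x(s) − x(σ)|² − Ũ_k/(|x'(s)|² (s − σ)) + Û_k/(2 |x'(s)|²) − ((x'(s) · x''(s))/|x'(s)|⁴) Ũ_k = O(s − σ) (entrywise as 2×2 matrices). -/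
open Real Filter MeasureTheory

/-- Euclidean norm on ℝ² (represented as `Fin 2 → ℝ`). -/
noncomputable def nrm2 (z : Fin 2 → ℝ) : ℝ := Real.sqrt (z 0 ^ 2 + z 1 ^ 2)

/-- Euclidean inner product on ℝ². -/
noncomputable def dot2 (a b : Fin 2 → ℝ) : ℝ := a 0 * b 0 + a 1 * b 1

/-- identity matrix entries -/
noncomputable def idm (i j : Fin 2) : ℝ := if i = j then 1 else 0

/-- J(z) = z zᵀ / |z|² -/
noncomputable def Jmat (z : Fin 2 → ℝ) (i j : Fin 2) : ℝ := z i * z j / nrm2 z ^ 2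

/-- divergence of a planar vector field -/
noncomputable def divg (v : (Fin 2 → ℝ) → (Fin 2 → ℝ)) (x : Fin 2 → ℝ) : ℝ :=
  fderiv ℝ v x (Pi.single 0 1) 0 + fderiv ℝ v x (Pi.single 1 1) 1

/-- traction operator T on a planar vector field:
(Tv)(x) = λ (div v)(x) ν + 2μ ((ν·∇)v)(x) + μ (div(Qv))(x) Qν, where Q = [[0,1],[-1,0]]. -/
noncomputable def traction (lam mu : ℝ) (ν : Fin 2 → ℝ)
    (v : (Fin 2 → ℝ) → (Fin 2 → ℝ)) (x : Fin 2 → ℝ) : Fin 2 → ℝ :=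
  (lam * divg v x) • ν + (2 * mu) • fderiv ℝ v x ν
    + (mu * divg (fun y => ![v y 1, -(v y 0)]) x) • ![ν 1, -(ν 0)]

/-- traction of a 2×2 matrix-valued field, acting columnwise -/
noncomputable def tractionM (lam mu : ℝ) (ν : Fin 2 → ℝ)
    (G : (Fin 2 → ℝ) → Fin 2 → Fin 2 → ℝ) (x : Fin 2 → ℝ) (i j : Fin 2) : ℝ :=
  traction lam mu ν (fun y i' => G y i' j) x i

/-- U₁(x,y) = λ ν (x−y)ᵀ + μ (x−y) νᵀ + μ (ν·(x−y)) I -/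
noncomputable def U1mat (lam mu : ℝ) (ν x y : Fin 2 → ℝ) (i j : Fin 2) : ℝ :=
  lam * ν i * (x j - y j) + mu * (x i - y i) * ν j + mu * dot2 ν (x - y) * idm i j

/-- U₂(x,y) = (λ+2μ) ν (x−y)ᵀ + μ (x−y) νᵀ + μ (ν·(x−y)) (I − 4J(x−y)) -/
noncomputable def U2mat (lam mu : ℝ) (ν x y : Fin 2 → ℝ) (i j : Fin 2) : ℝ :=
  (lam + 2 * mu) * ν i * (x j - y j) + mu * (x i - y i) * ν j
    + mu * dot2 ν (x - y) * (idm i j - 4 * Jmat (x - y) i j)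

/-- U_k(x,y): U₁ for k = 1, U₂ for k = 2 -/
noncomputable def Umat (lam mu : ℝ) (ν : Fin 2 → ℝ) (k : ℕ) (x y : Fin 2 → ℝ)
    (i j : Fin 2) : ℝ :=
  if k = 1 then U1mat lam mu ν x y i j else U2mat lam mu ν x y i j

/-- Ũ_k built from the tangent vector x'(s) -/
noncomputable def Utld (lam mu : ℝ) (ν x' : Fin 2 → ℝ) (k : ℕ) (i j : Fin 2) : ℝ :=
  (if k = 1 then lam else lam + 2 * mu) * ν i * x' j + mu * x' i * ν j

/-- Û_k built from x'(s) and x''(s) -/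
noncomputable def Uhat (lam mu : ℝ) (ν x' x'' : Fin 2 → ℝ) (k : ℕ) (i j : Fin 2) : ℝ :=
  (if k = 1 then lam else lam + 2 * mu) * ν i * x'' j + mu * x'' i * ν j
    + mu * dot2 ν x'' *
        (if k = 1 then idm i j else idm i j - 4 * x' i * x' j / nrm2 x' ^ 2)

/-!
Put `g(σ) = (x(σ) - x(s)) / (σ - s)`, so that `x(s) - x(σ) = (s - σ) g(σ)`. The map
`Φ(w) = U_k(w, 0) / |w|²` is homogeneous of degree `-1`, hence the kernel equals `Φ(g(σ)) / (s - σ)`.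
Taylor's theorem gives `g(σ) = x'(s) + (σ - s)/2 · x''(s) + O((σ - s)²)`, and `Φ` is smooth near
`x'(s) ≠ 0`, so `Φ(g(σ)) = Φ(x'(s)) + (σ - s)/2 · DΦ(x'(s)) x''(s) + O((σ - s)²)`. Since
`ν · x'(s) = 0`, one computes `Φ(x'(s)) = Ũ_k / |x'(s)|²` and
`DΦ(x'(s)) x''(s) = Û_k / |x'(s)|² - 2 (x'(s) · x''(s)) / |x'(s)|⁴ · Ũ_k`.
-/

open Asymptotics Topology

section Taylor

variable {E : Type*} [NormedAddCommGroup E] [NormedSpace ℝ E]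

theorem isBigO_sub_pow_succ_of_hasDerivAt {f f' : ℝ → E} {x₀ : ℝ} {n : ℕ}
    (hff' : ∀ᶠ x in 𝓝 x₀, HasDerivAt f (f' x) x) (hf' : f' =O[𝓝 x₀] fun x ↦ (x - x₀) ^ n) :
    (fun x ↦ f x - f x₀) =O[𝓝 x₀] fun x ↦ (x - x₀) ^ (n + 1) := by
  obtain ⟨c, hc₀, hc⟩ := hf'.exists_pos
  obtain ⟨ε, hε, hball⟩ := Metric.eventually_nhds_iff_ball.mp (hff'.and hc.bound)
  refine IsBigO.of_bound c (Metric.eventually_nhds_iff_ball.mpr ⟨ε, hε, fun x hx ↦ ?_⟩)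
  have hseg : ∀ y ∈ Set.uIcc x₀ x, y ∈ Metric.ball x₀ ε ∧ |y - x₀| ≤ |x - x₀| := fun y hy ↦
    have h := Set.abs_sub_left_of_mem_uIcc hy
    ⟨by rw [Metric.mem_ball, Real.dist_eq]; exact h.trans_lt (by simpa [Real.dist_eq] using hx), h⟩
  have := (convex_uIcc x₀ x).norm_image_sub_le_of_norm_hasDerivWithin_le (C := c * |x - x₀| ^ n)
    (fun y hy ↦ (hball y (hseg y hy).1).1.hasDerivWithinAt)
    (fun y hy ↦ (hball y (hseg y hy).1).2.trans (by
      simp only [norm_pow, Real.norm_eq_abs]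
      exact mul_le_mul_of_nonneg_left (pow_le_pow_left₀ (abs_nonneg _) (hseg y hy).2 n) hc₀.le))
    Set.left_mem_uIcc Set.right_mem_uIcc
  simpa [pow_succ, mul_assoc] using this

theorem ContDiffAt.isBigO_taylor_two {F : ℝ → E} {t₀ : ℝ} (hF : ContDiffAt ℝ 2 F t₀) :
    (fun t ↦ F t - F t₀ - (t - t₀) • deriv F t₀) =O[𝓝 t₀] fun t ↦ (t - t₀) ^ 2 := by
  have hd : ∀ᶠ t in 𝓝 t₀, HasDerivAt (fun t ↦ F t - (t - t₀) • deriv F t₀)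
      (deriv F t - deriv F t₀) t :=
    (hF.eventually (by simp)).mono fun t ht ↦
      ((ht.differentiableAt (by norm_num)).hasDerivAt.sub
        (((hasDerivAt_id t).sub_const t₀).smul_const _)).congr_deriv (by simp)
  have h' : (fun t ↦ deriv F t - deriv F t₀) =O[𝓝 t₀] fun t ↦ (t - t₀) ^ 1 := by
    simpa using ((hF.derivWithin (m := 1) (by norm_num)).differentiableAt
      (by norm_num)).isBigO_sub
  simpa [sub_right_comm] using isBigO_sub_pow_succ_of_hasDerivAt hd h'

theorem ContDiffAt.isBigO_taylor_three {F : ℝ → E} {t₀ : ℝ} (hF : ContDiffAt ℝ 3 F t₀) :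
    (fun t ↦ F t - F t₀ - (t - t₀) • deriv F t₀ - ((t - t₀) ^ 2 / 2) • deriv (deriv F) t₀)
      =O[𝓝 t₀] fun t ↦ (t - t₀) ^ 3 := by
  have hd : ∀ᶠ t in 𝓝 t₀, HasDerivAt
      (fun t ↦ F t - (t - t₀) • deriv F t₀ - ((t - t₀) ^ 2 / 2) • deriv (deriv F) t₀)
      (deriv F t - deriv F t₀ - (t - t₀) • deriv (deriv F) t₀) t := by
    refine (hF.eventually (by simp)).mono fun t ht ↦ ?_
    have hsq : HasDerivAt (fun t ↦ (t - t₀) ^ 2 / 2) (t - t₀) t := by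
      simpa using (((hasDerivAt_id t).sub_const t₀).pow 2).div_const 2
    exact (((ht.differentiableAt (by norm_num)).hasDerivAt.sub
      (((hasDerivAt_id t).sub_const t₀).smul_const _)).sub (hsq.smul_const _)).congr_deriv
      (by simp)
  have h' := (hF.derivWithin (m := 2) (by norm_num)).isBigO_taylor_two
  simpa [sub_right_comm _ (F t₀)] using isBigO_sub_pow_succ_of_hasDerivAt hd h'

theorem ContDiffAt.isBigO_slope_sub_taylor {F : ℝ → E} {t₀ : ℝ} (hF : ContDiffAt ℝ 3 F t₀) :
    (fun t ↦ slope F t₀ t - (deriv F t₀ + ((t - t₀) / 2) • deriv (deriv F) t₀))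
      =O[𝓝[≠] t₀] fun t ↦ (t - t₀) ^ 2 := by
  refine ((isBigO_refl (fun t ↦ (t - t₀)⁻¹) _).smul
    (hF.isBigO_taylor_three.mono nhdsWithin_le_nhds)).congr' ?_ ?_ <;>
    filter_upwards [self_mem_nhdsWithin] with t (ht : t ≠ t₀) <;>
    have := sub_ne_zero.2 ht
  · rw [slope_def_module]
    match_scalars <;> field_simp
  · rw [smul_eq_mul]
    field_simp

end Taylor

section Composition

variable {α E F : Type*} [NormedAddCommGroup E] [NormedSpace ℝ E]
  [NormedAddCommGroup F] [NormedSpace ℝ F]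

theorem ContDiffAt.isBigO_comp_sub_taylor {Φ : E → F} {p q : E} {l : Filter α}
    {g : α → E} {h : α → ℝ} (hΦ : ContDiffAt ℝ 2 Φ p) (hh : Tendsto h l (𝓝 0))
    (hg : (fun a ↦ g a - (p + h a • q)) =O[l] fun a ↦ h a ^ 2) :
    (fun a ↦ Φ (g a) - Φ p - h a • deriv (fun t : ℝ ↦ Φ (p + t • q)) 0) =O[l]
      fun a ↦ h a ^ 2 := by
  have hline : Tendsto (fun a ↦ p + h a • q) l (𝓝 p) := by
    simpa using (hh.smul_const q).const_add p
  have hg' : Tendsto g l (𝓝 p) := by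
    simpa using (hg.trans_tendsto (by simpa using hh.pow 2)).add hline
  have hLip : (fun a ↦ Φ (g a) - Φ (p + h a • q)) =O[l] fun a ↦ h a ^ 2 :=
    ((hΦ.hasStrictFDerivAt (by norm_num)).isBigO_sub.comp_tendsto
      (hg'.prodMk_nhds hline)).trans hg
  have hF : ContDiffAt ℝ 2 (fun t : ℝ ↦ Φ (p + t • q)) 0 :=
    ContDiffAt.comp (g := Φ) 0 (by simpa using hΦ) (by fun_prop)
  have hTaylor := hF.isBigO_taylor_two.comp_tendsto hh
  simp only [Function.comp_def, sub_zero, zero_smul, add_zero] at hTaylor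
  exact (hLip.add hTaylor).congr_left fun a ↦ by abel

end Composition

theorem sq_nrm2 (z : Fin 2 → ℝ) : nrm2 z ^ 2 = z 0 ^ 2 + z 1 ^ 2 :=
  Real.sq_sqrt (by positivity)

theorem sq_nrm2_ne_zero {z : Fin 2 → ℝ} (hz : z ≠ 0) : z 0 ^ 2 + z 1 ^ 2 ≠ 0 := by
  contrapose! hz
  ext l
  fin_cases l <;> simp <;> nlinarith [sq_nonneg (z 0), sq_nonneg (z 1)]

theorem nrm2_ne_zero {z : Fin 2 → ℝ} (hz : z ≠ 0) : nrm2 z ≠ 0 := fun h ↦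
  sq_nrm2_ne_zero hz (by rw [← sq_nrm2, h, zero_pow two_ne_zero])

theorem exists_eq_rot_of_dot2_eq_zero {ν p : Fin 2 → ℝ} (hp : p ≠ 0) (h : dot2 ν p = 0) :
    ∃ r : ℝ, ν 0 = -(r * p 1) ∧ ν 1 = r * p 0 := by
  have hp' := sq_nrm2_ne_zero hp
  rw [dot2] at h
  refine ⟨(ν 1 * p 0 - ν 0 * p 1) / (p 0 ^ 2 + p 1 ^ 2), ?_, ?_⟩ <;> field_simp
  · linear_combination p 0 * h
  · linear_combination p 1 * h

section Kernel

variable (lam mu : ℝ) (ν : Fin 2 → ℝ) (k : ℕ)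

/-- `U_k(x, y) / |x - y|²` as a function of `w = x - y`. -/
noncomputable def Ukernel (w : Fin 2 → ℝ) : Fin 2 → Fin 2 → ℝ :=
  fun i j ↦ Umat lam mu ν k w 0 i j / nrm2 w ^ 2

theorem Ukernel_sub_apply (X Y : Fin 2 → ℝ) (i j : Fin 2) :
    Ukernel lam mu ν k (X - Y) i j = Umat lam mu ν k X Y i j / nrm2 (X - Y) ^ 2 := by
  simp [Ukernel, Umat, U1mat, U2mat]

theorem Ukernel_smul (c : ℝ) (w : Fin 2 → ℝ) :
    Ukernel lam mu ν k (c • w) = c⁻¹ • Ukernel lam mu ν k w := by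
  ext i j
  rcases eq_or_ne c 0 with rfl | hc
  · simp [Ukernel, nrm2]
  simp only [Ukernel, Umat, U1mat, U2mat, Jmat, dot2, sq_nrm2, Pi.smul_apply, Pi.sub_apply,
    smul_eq_mul, Pi.zero_apply, sub_zero]
  rcases eq_or_ne (w 0 ^ 2 + w 1 ^ 2) 0 with hw | hw
  · have : (c * w 0) ^ 2 + (c * w 1) ^ 2 = 0 := by linear_combination c ^ 2 * hw
    simp [this, hw]
  split_ifs <;> field_simp

theorem Ukernel_of_dot_eq_zero {p : Fin 2 → ℝ} (hν : dot2 ν p = 0) :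
    Ukernel lam mu ν k p = fun i j ↦ Utld lam mu ν p k i j / nrm2 p ^ 2 := by
  ext i j
  simp only [Ukernel, Umat, U1mat, U2mat, Utld, Pi.zero_apply, sub_zero, hν]
  split_ifs <;> ring

theorem contDiffAt_Ukernel {n : WithTop ℕ∞} {w : Fin 2 → ℝ} (hw : w ≠ 0) :
    ContDiffAt ℝ n (Ukernel lam mu ν k) w := by
  have hw' := sq_nrm2_ne_zero hw
  refine contDiffAt_pi.2 fun i ↦ contDiffAt_pi.2 fun j ↦ ?_
  simp only [Ukernel, Umat, U1mat, U2mat, Jmat, dot2, sq_nrm2, Pi.sub_apply, Pi.zero_apply,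
    sub_zero]
  split_ifs
  · fun_prop (disch := exact hw')
  · fun_prop (disch := exact hw')

theorem hasDerivAt_Ukernel_line {p : Fin 2 → ℝ} (hp : p ≠ 0) (hν : dot2 ν p = 0)
    (q : Fin 2 → ℝ) :
    HasDerivAt (fun t : ℝ ↦ Ukernel lam mu ν k (p + t • q))
      (fun i j ↦ Uhat lam mu ν p q k i j / nrm2 p ^ 2
        - 2 * dot2 p q / nrm2 p ^ 4 * Utld lam mu ν p k i j) 0 := by
  -- eliminating `ν 0, ν 1` through `ν ⊥ p` turns the claimed derivative into a rational identity
  obtain ⟨r, hν0, hν1⟩ := exists_eq_rot_of_dot2_eq_zero hp hν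
  have hS0 := sq_nrm2_ne_zero hp
  have h4 : nrm2 p ^ 4 = (p 0 ^ 2 + p 1 ^ 2) ^ 2 := by rw [← sq_nrm2]; ring
  have hw : ∀ l, HasDerivAt (fun t : ℝ ↦ p l + t * q l) (q l) 0 := fun l ↦ by
    simpa using ((hasDerivAt_id (0 : ℝ)).mul_const (q l)).const_add (p l)
  have hS := ((hw 0).pow 2).add ((hw 1).pow 2)
  have hS0' : (p 0 + 0 * q 0) ^ 2 + (p 1 + 0 * q 1) ^ 2 ≠ 0 := by simpa using hS0
  have hd := ((hw 0).const_mul (ν 0)).add ((hw 1).const_mul (ν 1))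
  refine hasDerivAt_pi.2 fun i ↦ hasDerivAt_pi.2 fun j ↦ ?_
  simp only [Ukernel, Umat, U1mat, U2mat, Jmat, dot2, sq_nrm2, Pi.add_apply, Pi.smul_apply,
    Pi.sub_apply, Pi.zero_apply, sub_zero, smul_eq_mul, Uhat, Utld, h4]
  by_cases hk : k = 1
  · simp only [hk, if_true]
    refine (((((hw j).const_mul (lam * ν i)).add (((hw i).const_mul mu).mul_const (ν j))).add
      ((hd.const_mul mu).mul_const (idm i j))).div hS hS0').congr_deriv ?_
    simp only [Pi.add_apply, Pi.pow_apply, zero_mul, add_zero]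
    rw [hν0, hν1]
    field_simp
    ring
  · simp only [hk, if_false]
    refine (((((hw j).const_mul ((lam + 2 * mu) * ν i)).add
      (((hw i).const_mul mu).mul_const (ν j))).add ((hd.const_mul mu).mul
      ((hasDerivAt_const _ (idm i j)).sub ((((hw i).mul (hw j)).div hS hS0').const_mul 4)))).div
      hS hS0').congr_deriv ?_
    simp only [Pi.add_apply, Pi.sub_apply, Pi.mul_apply, Pi.div_apply, Pi.pow_apply, zero_mul,
      add_zero]
    rw [hν0, hν1]
    field_simp
    ring

end Kernel

noncomputable def kernelRemainder (lam mu : ℝ) (ν : Fin 2 → ℝ) (k : ℕ) (x : ℝ → Fin 2 → ℝ)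
    (s σ : ℝ) : Fin 2 → Fin 2 → ℝ := fun i j ↦
  Umat lam mu ν k (x s) (x σ) i j / nrm2 (x s - x σ) ^ 2
    - Utld lam mu ν (deriv x s) k i j / (nrm2 (deriv x s) ^ 2 * (s - σ))
    + Uhat lam mu ν (deriv x s) (deriv (deriv x) s) k i j / (2 * nrm2 (deriv x s) ^ 2)
    - dot2 (deriv x s) (deriv (deriv x) s) / nrm2 (deriv x s) ^ 4 *
        Utld lam mu ν (deriv x s) k i j

section Remainder

variable (lam mu : ℝ) (ν : Fin 2 → ℝ) (k : ℕ) {x : ℝ → Fin 2 → ℝ} {s : ℝ}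

theorem kernelRemainder_eq (hp : deriv x s ≠ 0) (hν : dot2 ν (deriv x s) = 0) {σ : ℝ}
    (hσ : σ ≠ s) :
    kernelRemainder lam mu ν k x s σ = (s - σ)⁻¹ • (Ukernel lam mu ν k (slope x s σ)
      - Ukernel lam mu ν k (deriv x s) - ((σ - s) / 2) • fun i j ↦
        Uhat lam mu ν (deriv x s) (deriv (deriv x) s) k i j / nrm2 (deriv x s) ^ 2
          - 2 * dot2 (deriv x s) (deriv (deriv x) s) / nrm2 (deriv x s) ^ 4 *
            Utld lam mu ν (deriv x s) k i j) := by
  have hsσ : s - σ ≠ 0 := sub_ne_zero.2 hσ.symm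
  have hn := nrm2_ne_zero hp
  have hsec : x s - x σ = (s - σ) • slope x s σ := by
    rw [slope_comm, sub_smul_slope, vsub_eq_sub]
  ext i j
  rw [kernelRemainder, ← Ukernel_sub_apply, hsec, Ukernel_smul,
    Ukernel_of_dot_eq_zero lam mu ν k hν]
  simp only [Pi.smul_apply, Pi.sub_apply, smul_eq_mul]
  field_simp
  ring

theorem isBigO_kernelRemainder (hx : ContDiffAt ℝ 3 x s) (hp : deriv x s ≠ 0)
    (hν : dot2 ν (deriv x s) = 0) :
    kernelRemainder lam mu ν k x s =O[𝓝[≠] s] fun σ ↦ σ - s := by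
  have hh : Tendsto (fun σ ↦ (σ - s) / 2) (𝓝[≠] s) (𝓝 0) :=
    tendsto_nhdsWithin_of_tendsto_nhds
      (by simpa using ((continuous_sub_right s).div_const 2).tendsto s)
  have hslope : (fun σ ↦ slope x s σ - (deriv x s + ((σ - s) / 2) • deriv (deriv x) s))
      =O[𝓝[≠] s] fun σ ↦ ((σ - s) / 2) ^ 2 :=
    hx.isBigO_slope_sub_taylor.trans <|
      (isBigO_self_const_mul (c := (1 / 4 : ℝ)) (by norm_num) _ _).congr_right fun σ ↦ by ring
  have hexp := (contDiffAt_Ukernel lam mu ν k (n := 2) hp).isBigO_comp_sub_taylor hh hslope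
  rw [(hasDerivAt_Ukernel_line lam mu ν k hp hν _).deriv] at hexp
  refine (((isBigO_refl (fun σ ↦ (s - σ)⁻¹) _).smul hexp).congr' ?_ ?_).trans
    ((isBigO_refl _ _).const_mul_left (-1 / 4))
  · filter_upwards [self_mem_nhdsWithin] with σ hσ
    exact (kernelRemainder_eq lam mu ν k hp hν hσ).symm
  · filter_upwards [self_mem_nhdsWithin] with σ (hσ : σ ≠ s)
    have : s - σ ≠ 0 := sub_ne_zero.2 hσ.symm
    rw [smul_eq_mul]
    field_simp
    ring

end Remainder

/-- Expansion of the singular kernels U_k(x(s),x(σ))/|x(s)−x(σ)|² along a smooth curve: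
U_k(x(s),x(σ))/|x(s)−x(σ)|² = Ũ_k/(|x'(s)|²(s−σ)) − Û_k/(2|x'(s)|²)
  + ((x'(s)·x''(s))/|x'(s)|⁴) Ũ_k + O(s−σ). -/
theorem Umat_kernel_expansion (lam mu : ℝ) (ν : Fin 2 → ℝ) (x : ℝ → (Fin 2 → ℝ))
    (hx : ContDiff ℝ 3 x) (s : ℝ) (hx' : deriv x s ≠ 0)
    (hν : dot2 ν (deriv x s) = 0) :
    ∃ δ > (0 : ℝ), (∀ σ : ℝ, σ ≠ s → |σ - s| < δ → x σ ≠ x s) ∧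
      ∃ C > (0 : ℝ), ∀ k ∈ ({1, 2} : Finset ℕ), ∀ σ : ℝ, σ ≠ s → |σ - s| < δ →
        ∀ i j : Fin 2,
          |Umat lam mu ν k (x s) (x σ) i j / nrm2 (x s - x σ) ^ 2
              - Utld lam mu ν (deriv x s) k i j / (nrm2 (deriv x s) ^ 2 * (s - σ))
              + Uhat lam mu ν (deriv x s) (deriv (deriv x) s) k i j /
                  (2 * nrm2 (deriv x s) ^ 2)
              - dot2 (deriv x s) (deriv (deriv x) s) / nrm2 (deriv x s) ^ 4 *
                  Utld lam mu ν (deriv x s) k i j|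
            ≤ C * |s - σ| := by
  obtain ⟨C₁, hC₁, h₁⟩ := (isBigO_kernelRemainder lam mu ν 1 hx.contDiffAt hx' hν).exists_pos
  obtain ⟨C₂, -, h₂⟩ := (isBigO_kernelRemainder lam mu ν 2 hx.contDiffAt hx' hν).exists_pos
  have hne := (hx.differentiable (by norm_num) s).hasDerivAt.eventually_ne (c := x s) hx'
  obtain ⟨δ, hδ, hball⟩ := Metric.mem_nhdsWithin_iff.mp (hne.and (h₁.bound.and h₂.bound))
  have hδ' : ∀ σ, σ ≠ s → |σ - s| < δ → _ := fun σ hσ hσs ↦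
    hball ⟨by rwa [Metric.mem_ball, Real.dist_eq], hσ⟩
  refine ⟨δ, hδ, fun σ hσ hσs ↦ (hδ' σ hσ hσs).1, max C₁ C₂, lt_max_of_lt_left hC₁, ?_⟩
  intro k hk σ hσ hσs i j
  obtain ⟨-, hb₁, hb₂⟩ := hδ' σ hσ hσs
  have hb : ‖kernelRemainder lam mu ν k x s σ‖ ≤ max C₁ C₂ * |s - σ| := by
    rw [abs_sub_comm, ← Real.norm_eq_abs]
    rcases Finset.mem_insert.mp hk with rfl | hk
    · exact hb₁.trans (by gcongr; exact le_max_left _ _)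
    · rw [Finset.mem_singleton.mp hk]
      exact hb₂.trans (by gcongr; exact le_max_right _ _)
  calc _ = ‖kernelRemainder lam mu ν k x s σ i j‖ := rfl
    _ ≤ ‖kernelRemainder lam mu ν k x s σ‖ := (norm_le_pi_norm _ j).trans (norm_le_pi_norm _ i)
    _ ≤ _ := hb
end

section
/- Let κ, c_s, c_p > 0, n ∈ ℕ, let x : ℝ → ℝ² be continuously differentiable, and let s ∈ ℝ with x'(s) ≠ 0. Then x(σ) ≠ x(s) for all σ ≠ s sufficiently close to s, and lim_{σ → s, σ ≠ s} (1/2)[ η_{1,n}(|x(s) − x(σ)|) I + η_{2,n}(|x(s) − x(σ)|) J(x(s) − x(σ)) ] = −(1/4)(1/c_p² + 1/c_s²) I, where I is the 2×2 identity matrix and J(z) = z z^⊤/|z|². -/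
open Real Filter MeasureTheory

noncomputable def acoef (γ : ℝ) : ℕ → ℕ → ℝ
  | n, m =>
    if m = 0 then 1
    else if n < m then 0
    else if m = n then -(γ / (n : ℝ)) * acoef γ (n - 1) (n - 1)
    else (1 / (2 * γ * (m : ℝ))) *
      (4 * (((m + 1) / 2 : ℕ) : ℝ) ^ 2 * acoef γ n (m + 1)
        - γ ^ 2 * ∑ k ∈ (Finset.Icc (m - 1) (n - 1)).attach,
            ((n - (k : ℕ) + 1 : ℕ) : ℝ) * acoef γ (k : ℕ) (m - 1))
  termination_by n m => (n, n - m)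
  decreasing_by
  · apply Prod.Lex.left; omega
  · apply Prod.Lex.right; omega
  · apply Prod.Lex.left
    have hk := k.2
    simp only [Finset.mem_Icc] at hk
    omega

/-- χ_{k,n} -/
noncomputable def chiC (n : ℕ) (k : ℤ) : ℝ :=
  if k = -2 then (n : ℝ) * ((n : ℝ) - 1)
  else if k = -1 then -4 * (n : ℝ) ^ 2
  else if k = 0 then 2 * (3 * (n : ℝ) ^ 2 + 3 * (n : ℝ) + 1)
  else if k = 1 then -4 * ((n : ℝ) + 1) ^ 2
  else if k = 2 then ((n : ℝ) + 1) * ((n : ℝ) + 2)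
  else 0

/-- the sum ∑_{k=-2}^{2} χ_{k,n} f(n+k), terms with n+k<0 omitted -/
noncomputable def sumChi (n : ℕ) (f : ℕ → ℝ) : ℝ :=
  ∑ k ∈ Finset.Icc (-2 : ℤ) 2,
    if 0 ≤ (n : ℤ) + k then chiC n k * f ((n : ℤ) + k).toNat else 0

noncomputable def besselI0 (z : ℝ) : ℝ := ∑' k : ℕ, (z / 2) ^ (2 * k) / (k.factorial : ℝ) ^ 2

noncomputable def besselI1 (z : ℝ) : ℝ :=
  ∑' k : ℕ, (z / 2) ^ (2 * k + 1) / ((k.factorial : ℝ) * ((k + 1).factorial : ℝ))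

noncomputable def psiH (k : ℕ) : ℝ := ∑ j ∈ Finset.range k, (1 : ℝ) / ((j : ℝ) + 1)

noncomputable def besselS0 (z : ℝ) : ℝ :=
  ∑' k : ℕ, psiH k * (z / 2) ^ (2 * k) / (k.factorial : ℝ) ^ 2

noncomputable def besselS1 (z : ℝ) : ℝ :=
  -(1 / 2) * ∑' k : ℕ, (psiH (k + 1) + psiH k) * (z / 2) ^ (2 * k + 1) /
    ((k.factorial : ℝ) * ((k + 1).factorial : ℝ))

noncomputable def vPol (γ : ℝ) (n : ℕ) (r : ℝ) : ℝ :=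
  ∑ m ∈ Finset.range (n / 2 + 1), acoef γ n (2 * m) * r ^ (2 * m)

noncomputable def wPol (γ : ℝ) (n : ℕ) (r : ℝ) : ℝ :=
  ∑ m ∈ Finset.range ((n - 1) / 2 + 1), acoef γ n (2 * m + 1) * r ^ (2 * m + 1)

noncomputable def vTil (γ : ℝ) (n : ℕ) (r : ℝ) : ℝ :=
  2 * ∑ m ∈ Finset.Icc 1 (n / 2), (m : ℝ) * acoef γ n (2 * m) * r ^ (2 * m)
    - γ * ∑ m ∈ Finset.range ((n - 1) / 2 + 1), acoef γ n (2 * m + 1) * r ^ (2 * m + 2)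

noncomputable def wTil (γ : ℝ) (n : ℕ) (r : ℝ) : ℝ :=
  2 * ∑ m ∈ Finset.Icc 1 ((n - 1) / 2), (m : ℝ) * acoef γ n (2 * m + 1) * r ^ (2 * m + 1)
    - γ * ∑ m ∈ Finset.range (n / 2 + 1), acoef γ n (2 * m) * r ^ (2 * m + 1)

noncomputable def phiF (γ : ℝ) (n : ℕ) (r : ℝ) : ℝ :=
  -besselI0 (γ * r) * vPol γ n r + besselI1 (γ * r) * wPol γ n r

noncomputable def phiHat (γ : ℝ) (n : ℕ) (r : ℝ) : ℝ :=
  (-(Real.eulerMascheroniConstant + Real.log (γ / 2)) * besselI0 (γ * r) + besselS0 (γ * r)) * vPol γ n r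
    + (1 / (γ * r) + (Real.eulerMascheroniConstant + Real.log (γ / 2)) * besselI1 (γ * r)
        + besselS1 (γ * r)) * wPol γ n r

noncomputable def phiTil (γ : ℝ) (n : ℕ) (r : ℝ) : ℝ :=
  -besselI0 (γ * r) * vTil γ n r + besselI1 (γ * r) * wTil γ n r

noncomputable def phiHatTil (γ : ℝ) (n : ℕ) (r : ℝ) : ℝ :=
  (-(Real.eulerMascheroniConstant + Real.log (γ / 2)) * besselI0 (γ * r) + besselS0 (γ * r)) * vTil γ n r
    + (1 / (γ * r) + (Real.eulerMascheroniConstant + Real.log (γ / 2)) * besselI1 (γ * r)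
        + besselS1 (γ * r)) * wTil γ n r

noncomputable def etaF (κ cs cp : ℝ) (ℓ n : ℕ) (r : ℝ) : ℝ :=
  (-(ℓ : ℝ)) ^ (ℓ - 1) / (κ ^ 2 * r ^ 2) *
      sumChi n (fun j => phiF (κ / cs) j r - phiF (κ / cp) j r)
    + (-1 : ℝ) ^ (ℓ - 1) / cp ^ 2 * phiF (κ / cp) n r
    + ((ℓ : ℝ) - 1) / cs ^ 2 * phiF (κ / cs) n r

noncomputable def xiF (κ cs cp : ℝ) (ℓ n : ℕ) (r : ℝ) : ℝ :=
  (-(ℓ : ℝ)) ^ (ℓ - 1) / (κ ^ 2 * r ^ 2) *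
      sumChi n (fun j => phiHat (κ / cs) j r - phiHat (κ / cp) j r)
    + (-1 : ℝ) ^ (ℓ - 1) / cp ^ 2 * phiHat (κ / cp) n r
    + ((ℓ : ℝ) - 1) / cs ^ 2 * phiHat (κ / cs) n r

noncomputable def etaTil (κ cs cp : ℝ) (ℓ n : ℕ) (r : ℝ) : ℝ :=
  (-(ℓ : ℝ)) ^ (ℓ - 1) / (κ ^ 2 * r ^ 2) *
      sumChi n (fun j => phiTil (κ / cs) j r - 2 * phiF (κ / cs) j r
        + 2 * phiF (κ / cp) j r - phiTil (κ / cp) j r)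
    + (-1 : ℝ) ^ (ℓ - 1) / cp ^ 2 * phiTil (κ / cp) n r
    + ((ℓ : ℝ) - 1) / cs ^ 2 * phiTil (κ / cs) n r

noncomputable def xiTil (κ cs cp : ℝ) (ℓ n : ℕ) (r : ℝ) : ℝ :=
  (-(ℓ : ℝ)) ^ (ℓ - 1) / (κ ^ 2 * r ^ 2) *
      sumChi n (fun j => phiHatTil (κ / cs) j r - 2 * phiHat (κ / cs) j r
        + 2 * phiHat (κ / cp) j r - phiHatTil (κ / cp) j r)
    + (-1 : ℝ) ^ (ℓ - 1) / cp ^ 2 * phiHatTil (κ / cp) n r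
    + ((ℓ : ℝ) - 1) / cs ^ 2 * phiHatTil (κ / cs) n r

/-!
Write `φ_j(γ, r) = -I₀(γ r) + r² ρ_j(γ, r)` (`ρ_j = phiRem γ j`), using `v_j = 1 + r² (…)`,
`w_j = r (…)` and `I₁(z) = (z/2) · (entire series)`. Then `ρ_j(γ, ·)` is continuous at `0`, with
`ρ_j(γ, 0) = -a_{j,2} + (γ/2) a_{j,1} = -γ² j (j + 3) / 8` by the recursion for `a_{j,1}`.
The weights `χ_{k,n}` annihilate affine functions of `n + k` and send `(n + k)²` to `4`, so
`∑ₖ χ_{k,n} φ_{n+k}(γ, r) / r² = ∑ₖ χ_{k,n} ρ_{n+k}(γ, r) → -γ²/2`, while `φ_n(γ, r) → -1`.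
With `γ = κ/c` this gives `η_{1,n} → -(1/c_p² + 1/c_s²)/2` and `η_{2,n} → 0`; since `|J| ≤ 1`
entrywise and `r = |x(s) - x(σ)| → 0⁺` (it is nonzero near `s` because `x'(s) ≠ 0`), the kernel
tends to `-(1/4)(1/c_p² + 1/c_s²) I`.
-/

open Topology

section SumChi

theorem sumChi_eq_sum_intCast (n : ℕ) (g : ℤ → ℝ) :
    sumChi n (fun j => g j) = ∑ k ∈ Finset.Icc (-2 : ℤ) 2, chiC n k * g (n + k) := by
  refine Finset.sum_congr rfl fun k hk => ?_
  split_ifs with h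
  · simp only [Int.toNat_of_nonneg h]
  · -- the omitted terms `n + k < 0` have `χ_{k,n} = 0`
    obtain ⟨rfl, rfl⟩ | ⟨rfl, rfl⟩ | ⟨rfl, rfl⟩ :
        (n = 0 ∧ k = -2) ∨ (n = 1 ∧ k = -2) ∨ (n = 0 ∧ k = -1) := by
      simp only [Finset.mem_Icc] at hk
      omega
    all_goals norm_num [chiC]

theorem sumChi_quadratic (n : ℕ) (a b c : ℝ) :
    sumChi n (fun j => a + b * j + c * j ^ 2) = 4 * c := by
  have := sumChi_eq_sum_intCast n (fun j => a + b * j + c * j ^ 2)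
  push_cast at this
  rw [this, show Finset.Icc (-2 : ℤ) 2 = {-2, -1, 0, 1, 2} by decide]
  norm_num [chiC]
  ring

theorem sumChi_const (n : ℕ) (a : ℝ) : sumChi n (fun _ => a) = 0 := by
  simpa using sumChi_quadratic n a 0 0

theorem sumChi_add (n : ℕ) (f g : ℕ → ℝ) :
    sumChi n (fun j => f j + g j) = sumChi n f + sumChi n g := by
  simp only [sumChi, ← Finset.sum_add_distrib]
  refine Finset.sum_congr rfl fun k _ => ?_
  split_ifs <;> ring

theorem sumChi_sub (n : ℕ) (f g : ℕ → ℝ) :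
    sumChi n (fun j => f j - g j) = sumChi n f - sumChi n g := by
  simp only [sumChi, ← Finset.sum_sub_distrib]
  refine Finset.sum_congr rfl fun k _ => ?_
  split_ifs <;> ring

theorem sumChi_const_mul (n : ℕ) (c : ℝ) (f : ℕ → ℝ) :
    sumChi n (fun j => c * f j) = c * sumChi n f := by
  simp only [sumChi, Finset.mul_sum]
  refine Finset.sum_congr rfl fun k _ => ?_
  split_ifs <;> ring

theorem continuousAt_sumChi (n : ℕ) {F : ℕ → ℝ → ℝ} {r₀ : ℝ} (hF : ∀ j, ContinuousAt (F j) r₀) :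
    ContinuousAt (fun r => sumChi n (fun j => F j r)) r₀ := by
  refine tendsto_finsetSum _ fun k _ => ?_
  split_ifs
  · exact continuousAt_const.mul (hF _)
  · exact continuousAt_const

end SumChi

section Acoef

theorem acoef_zero_right (γ : ℝ) (n : ℕ) : acoef γ n 0 = 1 := by
  rw [acoef]; simp

theorem acoef_of_lt (γ : ℝ) {n m : ℕ} (h : n < m) : acoef γ n m = 0 := by
  rw [acoef]; simp [Nat.ne_zero_of_lt h, h]

theorem acoef_one_one (γ : ℝ) : acoef γ 1 1 = -γ := by
  rw [acoef]; simp [acoef_zero_right]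

theorem sum_range_sub_add_one (j : ℕ) :
    ∑ k ∈ Finset.range j, ((j - k + 1 : ℕ) : ℝ) = j * (j + 3) / 2 := by
  induction j with
  | zero => simp
  | succ j ih =>
    rw [Finset.sum_range_succ, Nat.add_sub_cancel_left]
    have hshift : ∀ k ∈ Finset.range j, ((j + 1 - k + 1 : ℕ) : ℝ) = ((j - k + 1 : ℕ) : ℝ) + 1 := by
      intro k hk
      rw [Nat.sub_add_comm (Finset.mem_range.1 hk).le]
      push_cast; ring
    rw [Finset.sum_congr rfl hshift, Finset.sum_add_distrib, ih, Finset.sum_const,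
      Finset.card_range, nsmul_eq_mul]
    push_cast
    ring

theorem acoef_one_of_two_le (γ : ℝ) {n : ℕ} (hn : 2 ≤ n) :
    acoef γ n 1 = 1 / (2 * γ) * (4 * acoef γ n 2 - γ ^ 2 * (n * (n + 3) / 2)) := by
  rw [acoef, if_neg one_ne_zero, if_neg (by omega), if_neg (by omega)]
  rw [Finset.sum_attach (Finset.Icc (1 - 1) (n - 1))
    (fun k => ((n - k + 1 : ℕ) : ℝ) * acoef γ k (1 - 1))]
  have hIcc : Finset.Icc (1 - 1) (n - 1) = Finset.range n := by
    ext k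
    simp only [Finset.mem_Icc, Finset.mem_range]
    omega
  simp only [Nat.sub_self, acoef_zero_right, mul_one, hIcc, sum_range_sub_add_one]
  norm_num

theorem neg_acoef_two_add_acoef_one (γ : ℝ) (hγ : γ ≠ 0) (n : ℕ) :
    -acoef γ n 2 + γ / 2 * acoef γ n 1 = -(γ ^ 2 / 8) * (3 * n + n ^ 2) := by
  rcases Nat.lt_or_ge n 2 with hn | hn
  · interval_cases n
    · simp [acoef_of_lt]
    · rw [acoef_of_lt γ one_lt_two, acoef_one_one]; push_cast; ring
  · rw [acoef_one_of_two_le γ hn]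
    field_simp
    ring

end Acoef

section EvenSeries

noncomputable def evenSeries (d : ℕ → ℝ) (z : ℝ) : ℝ := ∑' k : ℕ, (z ^ 2 / 4) ^ k / d k

variable {d : ℕ → ℝ}

theorem continuousAt_evenSeries (hd : ∀ k, (k.factorial : ℝ) ≤ d k) :
    ContinuousAt (evenSeries d) 0 := by
  have hd_pos : ∀ k, 0 < d k := fun k => (Nat.cast_pos.2 k.factorial_pos).trans_le (hd k)
  -- uniform convergence on `[-2, 2]`, where `|z² / 4| ≤ 1`, by comparison with `∑ 1 / k!`
  have hcont : ContinuousOn (evenSeries d) (Set.Icc (-2) 2) := by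
    refine continuousOn_tsum (fun k => by fun_prop) (Real.summable_pow_div_factorial 1)
      fun k z hz => ?_
    have hq : |z ^ 2 / 4| ≤ 1 := by
      rw [abs_of_nonneg (by positivity), div_le_one₀ four_pos]
      nlinarith [hz.1, hz.2]
    rw [Real.norm_eq_abs, abs_div, abs_pow, abs_of_pos (hd_pos k), one_pow]
    exact div_le_div₀ zero_le_one (pow_le_one₀ (abs_nonneg _) hq)
      (Nat.cast_pos.2 k.factorial_pos) (hd k)
  exact hcont.continuousAt (Icc_mem_nhds (by norm_num) (by norm_num))

theorem continuousAt_evenSeries_const_mul (hd : ∀ k, (k.factorial : ℝ) ≤ d k) (γ : ℝ) :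
    ContinuousAt (fun r => evenSeries d (γ * r)) 0 :=
  (continuousAt_evenSeries hd).comp_of_eq (continuousAt_id.const_mul γ) (mul_zero γ)

theorem evenSeries_zero (d : ℕ → ℝ) : evenSeries d 0 = (d 0)⁻¹ := by
  rw [evenSeries, tsum_eq_single 0 fun k hk => by simp [hk]]
  simp

theorem besselI0_eq_evenSeries : besselI0 = evenSeries fun k => (k.factorial : ℝ) ^ 2 := by
  ext z
  refine tsum_congr fun k => ?_
  rw [pow_mul, div_pow]
  norm_num

theorem besselI1_eq_mul_evenSeries (z : ℝ) :
    besselI1 z = z / 2 * evenSeries (fun k => (k.factorial : ℝ) * (k + 1).factorial) z := by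
  rw [besselI1, evenSeries, ← tsum_mul_left]
  refine tsum_congr fun k => ?_
  rw [pow_succ, pow_mul, div_pow]
  ring

end EvenSeries

section PhiF

variable (γ : ℝ) (j : ℕ)

noncomputable def vTail (r : ℝ) : ℝ :=
  ∑ m ∈ Finset.range (j / 2), acoef γ j (2 * m + 2) * r ^ (2 * m)

noncomputable def wTail (r : ℝ) : ℝ :=
  ∑ m ∈ Finset.range ((j - 1) / 2 + 1), acoef γ j (2 * m + 1) * r ^ (2 * m)

theorem vPol_eq (r : ℝ) : vPol γ j r = 1 + r ^ 2 * vTail γ j r := by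
  rw [vPol, vTail, Finset.sum_range_succ', Finset.mul_sum, add_comm]
  simp only [mul_zero, acoef_zero_right, pow_zero, mul_one]
  congr 1
  refine Finset.sum_congr rfl fun m _ => ?_
  rw [mul_add_one]
  ring

theorem wPol_eq (r : ℝ) : wPol γ j r = r * wTail γ j r := by
  rw [wPol, wTail, Finset.mul_sum]
  refine Finset.sum_congr rfl fun m _ => ?_
  ring

theorem vTail_zero : vTail γ j 0 = acoef γ j 2 := by
  rcases Nat.lt_or_ge j 2 with hj | hj
  · simp [vTail, acoef_of_lt γ hj, Nat.div_eq_of_lt hj]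
  · simp [vTail, zero_pow_eq, Nat.div_pos hj two_pos]

theorem wTail_zero : wTail γ j 0 = acoef γ j 1 := by
  simp [wTail, zero_pow_eq]

noncomputable def phiRem (r : ℝ) : ℝ :=
  -besselI0 (γ * r) * vTail γ j r
    + γ / 2 * evenSeries (fun k => (k.factorial : ℝ) * (k + 1).factorial) (γ * r) * wTail γ j r

theorem phiF_eq (r : ℝ) : phiF γ j r = -besselI0 (γ * r) + r ^ 2 * phiRem γ j r := by
  rw [phiF, phiRem, vPol_eq, wPol_eq, besselI1_eq_mul_evenSeries]
  ring

theorem besselI0_zero : besselI0 0 = 1 := by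
  simp [besselI0_eq_evenSeries, evenSeries_zero]

theorem continuousAt_besselI0_mul : ContinuousAt (fun r => besselI0 (γ * r)) 0 := by
  rw [besselI0_eq_evenSeries]
  exact continuousAt_evenSeries_const_mul
    (fun k => by exact_mod_cast Nat.le_self_pow two_ne_zero _) γ

theorem continuousAt_phiRem : ContinuousAt (phiRem γ j) 0 := by
  have hI0 := continuousAt_besselI0_mul γ
  have hG := continuousAt_evenSeries_const_mul
    (d := fun k => (k.factorial : ℝ) * (k + 1).factorial)
    (fun k => by exact_mod_cast Nat.le_mul_of_pos_right _ (Nat.factorial_pos (k + 1))) γ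
  unfold phiRem vTail wTail
  fun_prop

theorem phiRem_zero (hγ : γ ≠ 0) : phiRem γ j 0 = -(γ ^ 2 / 8) * (3 * j + j ^ 2) := by
  rw [phiRem, vTail_zero, wTail_zero, mul_zero, besselI0_eq_evenSeries, evenSeries_zero,
    evenSeries_zero, ← neg_acoef_two_add_acoef_one γ hγ]
  simp

theorem tendsto_phiF : Tendsto (phiF γ j) (𝓝 0) (𝓝 (-1)) := by
  have h : ContinuousAt (fun r => -besselI0 (γ * r) + r ^ 2 * phiRem γ j r) 0 :=
    (continuousAt_besselI0_mul γ).neg.add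
      ((continuous_pow 2).continuousAt.mul (continuousAt_phiRem γ j))
  rw [funext (phiF_eq γ j)]
  convert h.tendsto using 2
  simp [besselI0_zero]

end PhiF

section Eta

variable (n : ℕ)

theorem sumChi_phiF (γ r : ℝ) :
    sumChi n (fun j => phiF γ j r) = r ^ 2 * sumChi n (fun j => phiRem γ j r) := by
  simp only [phiF_eq, sumChi_add n (fun _ => -besselI0 (γ * r)), sumChi_const, sumChi_const_mul,
    zero_add]

theorem tendsto_sumChi_phiRem {γ : ℝ} (hγ : γ ≠ 0) :
    Tendsto (fun r => sumChi n (fun j => phiRem γ j r)) (𝓝 0) (𝓝 (-γ ^ 2 / 2)) := by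
  have hval : sumChi n (fun j => phiRem γ j 0) = -γ ^ 2 / 2 := calc
    _ = sumChi n (fun j => 0 + -(3 * γ ^ 2 / 8) * j + -(γ ^ 2 / 8) * j ^ 2) := by
      congr 1
      funext j
      rw [phiRem_zero γ j hγ]
      ring
    _ = -γ ^ 2 / 2 := by
      rw [sumChi_quadratic]
      ring
  simpa only [hval] using (continuousAt_sumChi n (continuousAt_phiRem γ)).tendsto

theorem etaF_eq {κ cs cp r : ℝ} (ℓ : ℕ) (hr : r ≠ 0) :
    etaF κ cs cp ℓ n r =
      (-(ℓ : ℝ)) ^ (ℓ - 1) / κ ^ 2 *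
          (sumChi n (fun j => phiRem (κ / cs) j r) - sumChi n (fun j => phiRem (κ / cp) j r))
        + (-1) ^ (ℓ - 1) / cp ^ 2 * phiF (κ / cp) n r
        + ((ℓ : ℝ) - 1) / cs ^ 2 * phiF (κ / cs) n r := by
  rw [etaF, sumChi_sub, sumChi_phiF, sumChi_phiF]
  field_simp

theorem tendsto_etaF {κ cs cp : ℝ} (hκ : κ ≠ 0) (hcs : cs ≠ 0) (hcp : cp ≠ 0) (ℓ : ℕ) :
    Tendsto (etaF κ cs cp ℓ n) (𝓝[≠] 0)
      (𝓝 ((-(ℓ : ℝ)) ^ (ℓ - 1) * (1 / cp ^ 2 - 1 / cs ^ 2) / 2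
        - (-1) ^ (ℓ - 1) / cp ^ 2 - ((ℓ : ℝ) - 1) / cs ^ 2)) := by
  have h := ((((tendsto_sumChi_phiRem n (div_ne_zero hκ hcs)).sub
    (tendsto_sumChi_phiRem n (div_ne_zero hκ hcp))).const_mul ((-(ℓ : ℝ)) ^ (ℓ - 1) / κ ^ 2)).add
      ((tendsto_phiF (κ / cp) n).const_mul ((-1) ^ (ℓ - 1) / cp ^ 2))).add
      ((tendsto_phiF (κ / cs) n).const_mul (((ℓ : ℝ) - 1) / cs ^ 2))
  convert (h.mono_left nhdsWithin_le_nhds).congr' ?_ using 2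
  · field_simp
    ring
  · filter_upwards [self_mem_nhdsWithin] with r hr
    exact (etaF_eq n ℓ hr).symm

theorem tendsto_etaF_one {κ cs cp : ℝ} (hκ : κ ≠ 0) (hcs : cs ≠ 0) (hcp : cp ≠ 0) :
    Tendsto (etaF κ cs cp 1 n) (𝓝[≠] 0) (𝓝 (-(1 / 2) * (1 / cp ^ 2 + 1 / cs ^ 2))) := by
  convert tendsto_etaF n hκ hcs hcp 1 using 2
  norm_num
  ring

theorem tendsto_etaF_two {κ cs cp : ℝ} (hκ : κ ≠ 0) (hcs : cs ≠ 0) (hcp : cp ≠ 0) :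
    Tendsto (etaF κ cs cp 2 n) (𝓝[≠] 0) (𝓝 0) := by
  convert tendsto_etaF n hκ hcs hcp 2 using 2
  norm_num
  ring

end Eta

section Plane

theorem nrm2_eq_norm (z : Fin 2 → ℝ) : nrm2 z = ‖WithLp.toLp 2 z‖ := by
  simp [nrm2, EuclideanSpace.norm_eq, Fin.sum_univ_two]

theorem continuous_nrm2 : Continuous nrm2 := by
  simp only [funext nrm2_eq_norm]
  fun_prop

theorem nrm2_pos {z : Fin 2 → ℝ} (hz : z ≠ 0) : 0 < nrm2 z := by
  simpa [nrm2_eq_norm] using hz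

theorem abs_le_nrm2 (z : Fin 2 → ℝ) (i : Fin 2) : |z i| ≤ nrm2 z := by
  simpa [nrm2_eq_norm] using PiLp.norm_apply_le (WithLp.toLp 2 z) i

theorem abs_Jmat_le_one (z : Fin 2 → ℝ) (i j : Fin 2) : |Jmat z i j| ≤ 1 := by
  rw [Jmat, abs_div, abs_mul, abs_of_nonneg (sq_nonneg (nrm2 z)), sq]
  exact div_le_one_of_le₀ (mul_le_mul (abs_le_nrm2 z i) (abs_le_nrm2 z j) (abs_nonneg _)
    ((abs_nonneg _).trans (abs_le_nrm2 z i))) (mul_self_nonneg _)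

end Plane

theorem kernel_diagonal_limit_general (κ cs cp : ℝ) (hκ : 0 < κ) (hcs : 0 < cs) (hcp : 0 < cp)
    (n : ℕ) (x : ℝ → (Fin 2 → ℝ)) (s : ℝ) (hx' : deriv x s ≠ 0) :
    (∃ δ > (0 : ℝ), ∀ σ : ℝ, σ ≠ s → |σ - s| < δ → x σ ≠ x s) ∧
    Tendsto
      (fun σ : ℝ => fun i j : Fin 2 =>
        (1 / 2) * (etaF κ cs cp 1 n (nrm2 (x s - x σ)) * idm i j
          + etaF κ cs cp 2 n (nrm2 (x s - x σ)) * Jmat (x s - x σ) i j))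
      (nhdsWithin s {s}ᶜ)
      (nhds (fun i j : Fin 2 => -(1 / 4) * (1 / cp ^ 2 + 1 / cs ^ 2) * idm i j)) := by
  have hx : HasDerivAt x (deriv x s) s := (differentiableAt_of_deriv_ne_zero hx').hasDerivAt
  have hne : ∀ᶠ σ in 𝓝[≠] s, x σ ≠ x s := hx.eventually_ne hx'
  refine ⟨?_, ?_⟩
  · obtain ⟨δ, hδ, h⟩ := Metric.eventually_nhds_iff.1 (eventually_nhdsWithin_iff.1 hne)
    exact ⟨δ, hδ, fun σ hσ hσδ => h hσδ hσ⟩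
  have hr : Tendsto (fun σ => nrm2 (x s - x σ)) (𝓝[≠] s) (𝓝[≠] 0) := by
    refine tendsto_nhdsWithin_iff.2 ⟨?_, ?_⟩
    · have : Tendsto (fun σ => nrm2 (x s - x σ)) (𝓝 s) (𝓝 (nrm2 (x s - x s))) :=
        (continuous_nrm2.tendsto _).comp (tendsto_const_nhds.sub hx.continuousAt.tendsto)
      simpa [nrm2] using this.mono_left nhdsWithin_le_nhds
    · filter_upwards [hne] with σ hσ using (nrm2_pos (sub_ne_zero.2 hσ.symm)).ne'
  have h1 := (tendsto_etaF_one n hκ.ne' hcs.ne' hcp.ne').comp hr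
  have h2 := (tendsto_etaF_two n hκ.ne' hcs.ne' hcp.ne').comp hr
  refine tendsto_pi_nhds.2 fun i => tendsto_pi_nhds.2 fun j => ?_
  have hJ : IsBoundedUnder (· ≤ ·) (𝓝[≠] s) fun σ => ‖Jmat (x s - x σ) i j‖ :=
    isBoundedUnder_of ⟨1, fun σ => abs_Jmat_le_one _ i j⟩
  convert ((h1.mul_const (idm i j)).add (h2.zero_mul_isBoundedUnder_le hJ)).const_mul (1 / 2)
    using 2
  · simp only [Function.comp_apply]
  · ring

/-- Diagonal limit of the kernel (1/2)[η_{1,n}(|x(s)−x(σ)|) I + η_{2,n}(|x(s)−x(σ)|) J(x(s)−x(σ))]: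
as σ → s it tends to −(1/4)(1/c_p² + 1/c_s²) I. -/
theorem kernel_diagonal_limit (κ cs cp : ℝ) (hκ : 0 < κ) (hcs : 0 < cs) (hcp : 0 < cp)
    (n : ℕ) (x : ℝ → (Fin 2 → ℝ)) (hx : ContDiff ℝ 1 x) (s : ℝ) (hx' : deriv x s ≠ 0) :
    (∃ δ > (0 : ℝ), ∀ σ : ℝ, σ ≠ s → |σ - s| < δ → x σ ≠ x s) ∧
    Tendsto
      (fun σ : ℝ => fun i j : Fin 2 =>
        (1 / 2) * (etaF κ cs cp 1 n (nrm2 (x s - x σ)) * idm i j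
          + etaF κ cs cp 2 n (nrm2 (x s - x σ)) * Jmat (x s - x σ) i j))
      (nhdsWithin s {s}ᶜ)
      (nhds (fun i j : Fin 2 => -(1 / 4) * (1 / cp ^ 2 + 1 / cs ^ 2) * idm i j)) :=
  kernel_diagonal_limit_general κ cs cp hκ hcs hcp n x s hx'
end
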